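/- arXiv:1310.3137 — 6 statements merged into one kernel-verified Lean document; each statement's English description precedes it below -/
import Mathlib

section
/- Let (A_i)_{i ∈ ℕ} be a sequence of nonempty sets and 𝒰 a non-principal ultrafilter on ℕ. If for every n ∈ ℕ the set {i : |A_i| > n} belongs to 𝒰, then there is an injection from the Cantor space {0,1}^ℕ into the ultraproduct ∏ A_i / 𝒰; in particular the ultraproduct has cardinality at least 2^ω. -/
open FirstOrder Language Structure Filter Set Cardinal

universe u v w x

/-! Choose `m i ≤ i` maximal with `2 ^ m i ≤ #(A i)` and embed `Fin (m i) → Bool` into `A i`.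
Since `u` is non-principal and the `A i` are eventually larger than every `n`, `m i → ∞` along `u`,
so two distinct bit sequences have distinct length-`m i` prefixes for `u`-almost all `i`, and the
map sending `s` to the class of `i ↦ e i (s ∘ Fin.val)` is injective. -/

theorem Filter.Product.coe_injective_of_eventually_ne {α X : Type*} {ε : α → Type*}
    {l : Filter α} [l.NeBot] {g : X → (a : α) → ε a}
    (hg : ∀ x y, x ≠ y → ∀ᶠ a in l, g x a ≠ g y a) :
    Function.Injective fun x => (g x : l.Product ε) := by
  intro x y hxy
  by_contra hne
  have heq : ∀ᶠ a in l, g x a = g y a := Quotient.exact hxy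
  exact (heq.and (hg x y hne)).exists.elim fun _ h => h.2 h.1

theorem eventually_restrict_fin_ne {ι β : Type*} {l : Filter ι} {m : ι → ℕ}
    (hm : Tendsto m l atTop) {s t : ℕ → β} (hst : s ≠ t) :
    ∀ᶠ i in l, (fun j : Fin (m i) => s j) ≠ fun j : Fin (m i) => t j := by
  obtain ⟨k, hk⟩ := Function.ne_iff.1 hst
  filter_upwards [hm.eventually_gt_atTop k] with i hi heq
  exact hk (congrFun heq ⟨k, hi⟩)

theorem nonempty_embedding_of_two_pow_le_mk {α : Type*} {n : ℕ} (h : (2 : Cardinal) ^ n ≤ #α) :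
    Nonempty ((Fin n → Bool) ↪ α) := by
  rw [← lift_mk_le', mk_fintype, lift_natCast]
  simpa using h

theorem exists_tendsto_atTop_two_pow_le_mk {A : ℕ → Type*} [∀ i, Nonempty (A i)]
    {l : Filter ℕ} (hl : l ≤ cofinite) (h : ∀ n : ℕ, ∀ᶠ i in l, (n : Cardinal) < #(A i)) :
    ∃ m : ℕ → ℕ, Tendsto m l atTop ∧ ∀ i, (2 : Cardinal) ^ m i ≤ #(A i) := by
  let P i n := (2 : Cardinal) ^ n ≤ #(A i)
  have hP0 i : P i 0 := by simpa [P] using Cardinal.one_le_iff_ne_zero.2 (mk_ne_zero (A i))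
  -- the cap `i` keeps the maximum finite when `A i` is infinite
  refine ⟨fun i => Nat.findGreatest (P i) i, tendsto_atTop.2 fun k => ?_,
    fun i => Nat.findGreatest_spec (Nat.zero_le i) (hP0 i)⟩
  have hk : ∀ᶠ i in l, k ≤ i := (Nat.cofinite_eq_atTop ▸ hl) (eventually_ge_atTop k)
  filter_upwards [hk, h (2 ^ k)] with i hki hi
  exact Nat.le_findGreatest hki (show (2 : Cardinal) ^ k ≤ _ by exact_mod_cast hi.le)

theorem two_pow_aleph0_le_mk_of_injective {X : Type u} {f : (ℕ → Bool) → X}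
    (hf : Function.Injective f) : 2 ^ ℵ₀ ≤ #X := by
  simpa using lift_mk_le_lift_mk_of_injective hf

theorem cantor_embeds_in_ultraproduct {A : ℕ → Type u} [∀ i, Nonempty (A i)]
    (u : Ultrafilter ℕ) (hu : (u : Filter ℕ) ≤ Filter.cofinite)
    (h : ∀ n : ℕ, {i : ℕ | (n : Cardinal) < #(A i)} ∈ u) :
    (∃ f : (ℕ → Bool) → (u : Filter ℕ).Product A, Function.Injective f) ∧
      2 ^ Cardinal.aleph0 ≤ #((u : Filter ℕ).Product A) := by
  obtain ⟨m, hm, hpow⟩ := exists_tendsto_atTop_two_pow_le_mk hu h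
  let e i := (nonempty_embedding_of_two_pow_le_mk (hpow i)).some
  have hinj : Function.Injective fun s : ℕ → Bool =>
      ((fun i => e i fun j : Fin (m i) => s j : (i : ℕ) → A i) : (u : Filter ℕ).Product A) :=
    Filter.Product.coe_injective_of_eventually_ne fun s t hst =>
      (eventually_restrict_fin_ne hm hst).mono fun i hi => (e i).injective.ne hi
  exact ⟨⟨_, hinj⟩, two_pow_aleph0_le_mk_of_injective hinj⟩
end

section
/- Let (A_i)_{i ∈ ℕ} be a sequence of nonempty sets each of cardinality at most 2^ω, and 𝒰 a non-principal ultrafilter on ℕ. Then the ultraproduct ∏ A_i / 𝒰 is either finite or has cardinality exactly 2^ω (the cardinality of the continuum). -/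
open FirstOrder Language Structure Filter Set Cardinal

universe u v w x


theorem aux_prod_finite {A : ℕ → Type u} (u : Ultrafilter ℕ) {B : Type u} [Finite B]
    [Nonempty B] {T : Set ℕ} (hT : T ∈ u) (e : ∀ i, A i → B)
    (he : ∀ i ∈ T, Function.Injective (e i)) :
    Finite ((u : Filter ℕ).Product A) := by
  classical
  have hex : ∀ x : ∀ i, A i, ∃ c : B, {i | i ∈ T ∧ e i (x i) = c} ∈ u := by
    intro x
    have : (⋃ c ∈ (Set.univ : Set B), {i | i ∈ T ∧ e i (x i) = c}) ∈ u := by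
      refine u.sets_of_superset hT ?_
      intro i hi
      simp only [Set.mem_iUnion, Set.mem_univ, Set.mem_setOf_eq]
      exact ⟨e i (x i), trivial, hi, rfl⟩
    rcases (Ultrafilter.finite_biUnion_mem_iff Set.finite_univ).mp this with ⟨c, _, hc⟩
    exact ⟨c, hc⟩
  have huniq : ∀ (x : ∀ i, A i) (c c' : B),
      {i | i ∈ T ∧ e i (x i) = c} ∈ u → {i | i ∈ T ∧ e i (x i) = c'} ∈ u → c = c' := by
    intro x c c' h1 h2
    rcases Ultrafilter.nonempty_of_mem (u.inter_mem h1 h2) with ⟨i, hi1, hi2⟩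
    exact hi1.2.symm.trans hi2.2
  let g : ((u : Filter ℕ).Product A) → B :=
    Quotient.lift (fun x => Classical.choose (hex x)) (by
      intro x y hxy
      have hxy' : {i | x i = y i} ∈ u := hxy
      apply huniq x _ _ (Classical.choose_spec (hex x))
      refine u.sets_of_superset (u.inter_mem hxy' (Classical.choose_spec (hex y))) ?_
      rintro i ⟨hix, hiT, hie⟩
      exact ⟨hiT, by rw [hix]; exact hie⟩)
  have hginj : Function.Injective g := by
    refine Quotient.ind₂ ?_
    intro x y hxy
    have hx := Classical.choose_spec (hex x)
    have hy := Classical.choose_spec (hex y)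
    simp only [g, Quotient.lift_mk] at hxy
    rw [hxy] at hx
    apply Quotient.sound
    show ∀ᶠ i in (u : Filter ℕ), x i = y i
    rw [Filter.eventually_iff]
    refine u.sets_of_superset (u.inter_mem hx hy) ?_
    rintro i ⟨⟨hiT, hix⟩, ⟨_, hiy⟩⟩
    exact he i hiT (hix.trans hiy.symm)
  exact Finite.of_injective g hginj

theorem ultraproduct_finite_or_continuum {A : ℕ → Type u} [∀ i, Nonempty (A i)]
    (hA : ∀ i, #(A i) ≤ 2 ^ Cardinal.aleph0)
    (u : Ultrafilter ℕ) (hu : (u : Filter ℕ) ≤ Filter.cofinite) :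
    Finite ((u : Filter ℕ).Product A) ∨ #((u : Filter ℕ).Product A) = 2 ^ Cardinal.aleph0 := by
  classical
  by_cases hfin : Finite ((u : Filter ℕ).Product A)
  · exact Or.inl hfin
  refine Or.inr (le_antisymm ?_ ?_)
  · calc #((u : Filter ℕ).Product A) ≤ #(∀ i, A i) := mk_quotient_le
      _ = prod fun i => #(A i) := mk_pi A
      _ ≤ prod fun _ : ℕ => (2 ^ aleph0 : Cardinal.{u}) := prod_le_prod _ _ hA
      _ = (2 ^ aleph0) ^ (aleph0 : Cardinal.{u}) := by rw [prod_const]; simp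
      _ = 2 ^ (aleph0 : Cardinal.{u}) := by rw [← power_mul, aleph0_mul_aleph0]
  -- lower bound
  -- Step 1: all the sets {i | m ≤ #(A i)} are in u
  have hm : ∀ m : ℕ, {i | (m : Cardinal.{u}) ≤ #(A i)} ∈ u := by
    intro m
    by_contra hc
    have hTc : {i | (m : Cardinal.{u}) ≤ #(A i)}ᶜ ∈ u :=
      Ultrafilter.compl_mem_iff_notMem.mpr hc
    have hTc' : {i | #(A i) < (m : Cardinal.{u})} ∈ u := by
      refine u.sets_of_superset hTc ?_
      intro i hi
      exact lt_of_not_ge (by simpa using hi)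
    -- m ≥ 1
    rcases Ultrafilter.nonempty_of_mem hTc' with ⟨i0, hi0⟩
    have h1 : (1 : Cardinal.{u}) ≤ #(A i0) := Cardinal.one_le_iff_ne_zero.mpr (Cardinal.mk_ne_zero _)
    have hm1 : (1 : Cardinal.{u}) < (m : Cardinal) := lt_of_le_of_lt h1 hi0
    have hm0 : 0 < m := by
      by_contra h
      push_neg at h
      interval_cases m
      simp at hm1
    haveI : NeZero m := ⟨hm0.ne'⟩
    -- build embeddings
    have hemb : ∀ i ∈ {i | #(A i) < (m : Cardinal.{u})}, Nonempty (A i ↪ ULift.{u} (Fin m)) := by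
      intro i hi
      have : #(A i) ≤ #(ULift.{u} (Fin m)) := by
        rw [Cardinal.mk_uLift, Cardinal.mk_fin, Cardinal.lift_natCast]
        exact le_of_lt hi
      exact Cardinal.le_def _ _ |>.mp this
    let e : ∀ i, A i → ULift.{u} (Fin m) := fun i =>
      if h : #(A i) < (m : Cardinal.{u}) then (hemb i h).some else fun _ => default
    have := aux_prod_finite u hTc' e (fun i hi => by
      have he : e i = ⇑(hemb i hi).some := dif_pos hi
      rw [he]
      exact (hemb i hi).some.injective)
    exact hfin this
  -- Step 2: embed the Cantor set
  have hpow : ∀ (i n : ℕ), ((2 ^ n : ℕ) : Cardinal.{u}) ≤ #(A i) →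
      Nonempty ((Fin n → Bool) ↪ A i) := by
    intro i n h
    have h1 : #(ULift.{u} (Fin n → Bool)) ≤ #(A i) := by
      rw [Cardinal.mk_uLift]
      have : #(Fin n → Bool) = ((2 ^ n : ℕ) : Cardinal) := by simp [Cardinal.mk_fintype]
      rw [this, Cardinal.lift_natCast]
      exact h
    rcases Cardinal.le_def _ _ |>.mp h1 with ⟨f⟩
    exact ⟨(Equiv.ulift.symm.toEmbedding).trans f⟩
  let P : ℕ → ℕ → Prop := fun i n => ((2 ^ n : ℕ) : Cardinal.{u}) ≤ #(A i)
  let b : ℕ → ℕ := fun i => Nat.findGreatest (P i) i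
  have hb : ∀ i, P i (b i) := by
    intro i
    refine Nat.findGreatest_spec (Nat.zero_le i) ?_
    have : (1 : Cardinal.{u}) ≤ #(A i) := Cardinal.one_le_iff_ne_zero.mpr (Cardinal.mk_ne_zero _)
    simpa [P] using this
  have hble : ∀ i k, k ≤ i → P i k → k ≤ b i := fun i k h1 h2 => Nat.le_findGreatest h1 h2
  let e : ∀ i, (Fin (b i) → Bool) ↪ A i := fun i => (hpow i (b i) (hb i)).some
  let F : (ℕ → Bool) → ((u : Filter ℕ).Product A) :=
    fun s => Quotient.mk _ (fun i => e i (fun k => s k.val))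
  have hFinj : Function.Injective F := by
    intro s t hst
    by_contra hne
    rcases Function.ne_iff.mp hne with ⟨k, hk⟩
    have hW : ({i | ((2 ^ (k+1) : ℕ) : Cardinal.{u}) ≤ #(A i)} ∩ {i | k + 1 ≤ i}) ∈ u := by
      refine u.inter_mem (hm (2 ^ (k+1))) ?_
      refine hu ?_
      have : {i : ℕ | k + 1 ≤ i}ᶜ = {i | i < k + 1} := by ext i; simp [Nat.lt_succ_iff, Nat.not_le]
      rw [Filter.mem_cofinite, this]
      exact Set.finite_lt_nat _
    have heq : {i | (fun i => e i (fun j => s j.val)) i = (fun i => e i (fun j => t j.val)) i} ∈ u := by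
      have := Quotient.exact hst
      exact this
    rcases Ultrafilter.nonempty_of_mem (u.inter_mem heq hW) with ⟨i, hieq, hiP, hii⟩
    have hbk : k + 1 ≤ b i := hble i (k+1) hii hiP
    have : (fun j : Fin (b i) => s j.val) = fun j : Fin (b i) => t j.val :=
      (e i).injective hieq
    have := congrFun this ⟨k, lt_of_lt_of_le (Nat.lt_succ_self k) hbk⟩
    exact hk this
  have hle := Cardinal.mk_le_of_injective
    (f := fun s : ULift.{u} (ℕ → Bool) => F s.down)
    (fun s t h => by
      ext1
      exact hFinj h)
  calc (2 : Cardinal.{u}) ^ aleph0 = #(ULift.{u} (ℕ → Bool)) := by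
        rw [Cardinal.mk_uLift]
        have : #(ℕ → Bool) = 2 ^ aleph0 := by simp [Cardinal.mk_arrow]
        rw [this]
        simp [Cardinal.lift_power]
    _ ≤ #((u : Filter ℕ).Product A) := hle
end

section
/- Let σ be a first-order language, (𝔄_i)_{i ∈ ℕ} a sequence of σ-structures, 𝒰 a non-principal ultrafilter on ℕ, and Φ a countable set of σ-formulas in one free variable that is finitely realized in the ultraproduct 𝔄 = ∏ 𝔄_i / 𝒰 (i.e., for every finite Φ₀ ⊆ Φ, 𝔄 ⊨ ∃x ⋀Φ₀(x)). Then Φ is realized in 𝔄, i.e., there is a ∈ 𝔄 with 𝔄 ⊨ φ(a) for all φ ∈ Φ. -/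
open FirstOrder Language Structure Filter Set Cardinal

universe u v w x


theorem countable_type_realized_in_ultraproduct {L : FirstOrder.Language.{u, v}}
    (A : ℕ → Type w) [∀ i, L.Structure (A i)] [∀ i, Nonempty (A i)]
    (u : Ultrafilter ℕ) (hu : (u : Filter ℕ) ≤ Filter.cofinite)
    (Φ : Set (L.Formula Unit)) (hΦ : Φ.Countable)
    (hfin : ∀ F : Finset (L.Formula Unit), ↑F ⊆ Φ →
      ∃ x : (u : Filter ℕ).Product A, ∀ φ ∈ F, φ.Realize (fun _ => x)) :
    ∃ x : (u : Filter ℕ).Product A, ∀ φ ∈ Φ, φ.Realize (fun _ => x) := by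
  classical
  rcases Φ.eq_empty_or_nonempty with rfl | hne
  · exact ⟨Classical.arbitrary _, by simp⟩
  obtain ⟨φs, rfl⟩ := hΦ.exists_eq_range hne
  -- witnesses for initial segments
  have H : ∀ n : ℕ, ∃ f : ∀ i, A i, ∀ k ≤ n,
      (φs k).Realize (fun _ : Unit => (↑f : (u : Filter ℕ).Product A)) := by
    intro n
    obtain ⟨x, hx⟩ := hfin ((Finset.range (n + 1)).image φs)
      (by intro φ hφ; simp only [Finset.coe_image] at hφ
          rcases hφ with ⟨k, _, rfl⟩; exact Set.mem_range_self k)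
    obtain ⟨f, rfl⟩ := Quotient.exists_rep x
    exact ⟨f, fun k hk => hx (φs k)
      (Finset.mem_image_of_mem φs (Finset.mem_range.2 (Nat.lt_succ_of_le hk)))⟩
  choose f hf using H
  -- the sets where the witness works, by Łoś
  have hS : ∀ n : ℕ, {i : ℕ | ∀ k ≤ n, (φs k).Realize (fun _ : Unit => f n i)} ∈ u := by
    intro n
    have : ∀ k ≤ n, {i : ℕ | (φs k).Realize (fun _ : Unit => f n i)} ∈ u := by
      intro k hk
      have := (Ultraproduct.realize_formula_cast (u := u) (φs k)
        (fun _ : Unit => f n)).1 (hf n k hk)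
      exact this
    have h2 : {i : ℕ | ∀ k ≤ n, (φs k).Realize (fun _ : Unit => f n i)} =
        ⋂ k ∈ Finset.range (n + 1), {i : ℕ | (φs k).Realize (fun _ : Unit => f n i)} := by
      ext i
      simp [Nat.lt_succ_iff]
    rw [h2]
    exact (Filter.biInter_finset_mem _).2 fun k hk =>
      this k (Nat.lt_succ_iff.1 (Finset.mem_range.1 hk))
  set S : ℕ → Set ℕ := fun n => {i : ℕ | ∀ k ≤ n, (φs k).Realize (fun _ : Unit => f n i)}
  set T : ℕ → Set ℕ := fun n => ⋂ m ∈ Finset.range (n + 1), S m with hT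
  have hTu : ∀ n, T n ∈ u := fun n =>
    (Filter.biInter_finset_mem _).2 fun m _ => hS m
  have hTS : ∀ n, T n ⊆ S n := fun n i hi => by
    have := Set.mem_iInter₂.1 hi n (Finset.mem_range.2 (Nat.lt_succ_self n))
    exact this
  have hTmono : ∀ {m n : ℕ}, m ≤ n → T n ⊆ T m := by
    intro m n hmn i hi
    refine Set.mem_iInter₂.2 fun j hj => Set.mem_iInter₂.1 hi j ?_
    exact Finset.mem_range.2 (lt_of_lt_of_le (Finset.mem_range.1 hj) (by omega))
  -- diagonal element
  set N : ℕ → ℕ := fun i => Nat.findGreatest (fun n => i ∈ T n) i with hN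
  set g : ∀ i, A i := fun i => f (N i) i with hg
  refine ⟨(↑g : (u : Filter ℕ).Product A), ?_⟩
  rintro φ ⟨k, rfl⟩
  apply (Ultraproduct.realize_formula_cast (u := u) (φs k) (fun _ : Unit => g)).2
  have hmem : T k ∩ {i : ℕ | k ≤ i} ∈ u := by
    refine Filter.inter_mem (hTu k) (hu ?_)
    rw [Filter.mem_cofinite]
    have : {i : ℕ | k ≤ i}ᶜ = Set.Iio k := by ext i; simp [not_le]
    rw [this]; exact Set.finite_Iio k
  refine Filter.mem_of_superset hmem ?_
  rintro i ⟨hiT, hik⟩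
  have hki : k ≤ i := hik
  have hNk : k ≤ N i := Nat.le_findGreatest (P := fun n => i ∈ T n) hki hiT
  have hiTN : i ∈ T (N i) := by
    have := Nat.findGreatest_spec (P := fun n => i ∈ T n) (m := k) hki hiT
    exact this
  have := hTS (N i) hiTN
  exact this k hNk
end

section
/- Let σ be a countable first-order language, (𝔄_i) and (𝔅_i) sequences of σ-structures each of cardinality at most 2^ω, and 𝒰₁, 𝒰₂ non-principal ultrafilters on ℕ. Assuming the continuum hypothesis, the ultraproducts ∏ 𝔄_i / 𝒰₁ and ∏ 𝔅_i / 𝒰₂ are isomorphic if and only if they are elementarily equivalent. -/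
/-!
Under CH both ultraproducts have cardinality at most `2 ^ ℵ₀ = ℵ₁`. An ultraproduct over a
non-principal ultrafilter on `ℕ` is countably saturated: if each finite part of a sequence of
formulas is satisfiable, let `d i` be the largest `n ≤ i` such that the first `n` formulas are
simultaneously satisfiable in the `i`-th factor; a witness chosen there in each factor realizes all
formulas, because `d` tends to infinity along the ultrafilter. Consequently a partial elementary
map with countable domain between two elementarily equivalent such ultraproducts can be extended
by any element on either side, and a back-and-forth construction of length `ω₁`, all of whose
proper initial segments are countable, exhausts both structures and yields an isomorphism.
-/

open FirstOrder Language Structure Filter Set Cardinal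

universe u v w

theorem Filter.exists_forall_eventually_le_and_mem {l : Filter ℕ} (hl : l ≤ cofinite)
    {X : ℕ → Set ℕ} (hX : ∀ n, X n ∈ l) :
    ∃ d : ℕ → ℕ, ∀ k, ∀ᶠ i in l, k ≤ d i ∧ i ∈ X (d i) := by
  classical
  refine ⟨fun i => Nat.findGreatest (i ∈ X ·) i, fun k => ?_⟩
  have hk : ∀ᶠ i in l, k ≤ i :=
    (eventually_ge_atTop k).filter_mono (hl.trans_eq Nat.cofinite_eq_atTop)
  filter_upwards [hk, hX k] with i hki hi
  exact ⟨Nat.le_findGreatest hki hi, Nat.findGreatest_spec (P := (i ∈ X ·)) hki hi⟩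

theorem Filter.mk_product_le_two_power_aleph0 (l : Filter ℕ) {A : ℕ → Type w}
    (hA : ∀ i, #(A i) ≤ 2 ^ ℵ₀) : #(l.Product A) ≤ 2 ^ ℵ₀ :=
  calc #(l.Product A) ≤ #(∀ i, A i) := mk_quotient_le
    _ ≤ Cardinal.prod fun _ : ℕ => (2 : Cardinal.{w}) ^ ℵ₀ := by
      rw [mk_pi]
      exact Cardinal.prod_le_prod _ _ hA
    _ = 2 ^ ℵ₀ := by simp

theorem WellFoundedLT.exists_recursive_choice {κ α : Type*} [Preorder κ] [WellFoundedLT κ]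
    [Nonempty α] (P : (i : κ) → (Iio i → α) → α → Prop) :
    ∃ f : κ → α, ∀ i, (∃ p, P i (fun j => f j) p) → P i (fun j => f j) (f i) := by
  refine ⟨IsWellFounded.fix (· < ·) fun i rec => Classical.epsilon (P i fun j => rec j j.2),
    fun i hi => ?_⟩
  rw [IsWellFounded.fix_eq]
  exact Classical.epsilon_spec hi

namespace FirstOrder.Language

variable {L : Language.{u, v}}

section PartialElementary

variable {M N : Type*} [L.Structure M] [L.Structure N] {γ : Type*}

variable (L) in
def IsPartialElementary (a : γ → M) (b : γ → N) : Prop :=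
  ∀ ⦃n⦄ (φ : L.Formula (Fin n)) (ι : Fin n → γ), φ.Realize (a ∘ ι) ↔ φ.Realize (b ∘ ι)

namespace IsPartialElementary

variable {a : γ → M} {b : γ → N}

theorem symm (h : IsPartialElementary L a b) : IsPartialElementary L b a :=
  fun _ φ ι => (h φ ι).symm

theorem comp {δ : Type*} (h : IsPartialElementary L a b) (g : δ → γ) :
    IsPartialElementary L (a ∘ g) (b ∘ g) :=
  fun _ φ ι => h φ (g ∘ ι)

theorem realize_formula_of_finite [Finite γ] (h : IsPartialElementary L a b)
    (φ : L.Formula γ) : φ.Realize a ↔ φ.Realize b := by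
  obtain ⟨n, ⟨g⟩⟩ := Finite.exists_equiv_fin γ
  simpa [Formula.realize_relabel, Function.comp_assoc] using h (φ.relabel g) g.symm

theorem realize_formula (h : IsPartialElementary L a b) (φ : L.Formula γ) :
    φ.Realize a ↔ φ.Realize b := by
  classical
  have hs : (φ.freeVarFinset : Set γ) ⊆ φ.freeVarFinset := subset_rfl
  simp only [Formula.Realize]
  rw [← BoundedFormula.realize_restrictFreeVar' hs, ← BoundedFormula.realize_restrictFreeVar' hs]
  exact (h.comp (Subtype.val : ↥(φ.freeVarFinset : Set γ) → γ)).realize_formula_of_finite _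

theorem eq_iff (h : IsPartialElementary L a b) (x y : γ) : a x = a y ↔ b x = b y := by
  simpa [Formula.realize_equal, Term.realize] using
    h (Term.equal (Term.var 0) (Term.var 1)) ![x, y]

noncomputable def toElementaryEmbedding (h : IsPartialElementary L a b) (ha : a.Surjective) :
    M ↪ₑ[L] N where
  toFun := b ∘ Function.surjInv ha
  map_formula' n φ x := by
    have := h φ (Function.surjInv ha ∘ x)
    rwa [← Function.comp_assoc, (Function.rightInverse_surjInv ha).comp_eq_id,
      Function.id_comp, iff_comm] at this

theorem toElementaryEmbedding_apply (h : IsPartialElementary L a b) (ha : a.Surjective)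
    (x : γ) : h.toElementaryEmbedding ha (a x) = b x :=
  (h.eq_iff _ x).1 (Function.surjInv_eq ha (a x))

noncomputable def equivOfSurjective (h : IsPartialElementary L a b) (ha : a.Surjective)
    (hb : b.Surjective) : M ≃[L] N :=
  let F := h.toElementaryEmbedding ha
  have hF : F.toFun.Surjective := fun y => by
    obtain ⟨x, rfl⟩ := hb y
    exact ⟨a x, h.toElementaryEmbedding_apply ha x⟩
  ⟨Equiv.ofBijective F ⟨F.injective, hF⟩, fun f x => F.map_fun f x, fun r x => F.map_rel r x⟩

end IsPartialElementary

theorem ElementarilyEquivalent.isPartialElementary_of_isEmpty [IsEmpty γ] (h : M ≅[L] N)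
    (a : γ → M) (b : γ → N) : IsPartialElementary L a b := by
  intro n φ ι
  have : IsEmpty (Fin n) := ι.isEmpty
  have hM : a ∘ ι = (default : Empty → M) ∘ isEmptyElim := Subsingleton.elim _ _
  have hN : b ∘ ι = (default : Empty → N) ∘ isEmptyElim := Subsingleton.elim _ _
  rw [hM, hN, ← Formula.realize_relabel, ← Formula.realize_relabel]
  exact h.realize_sentence _

theorem isPartialElementary_restrict_of_forall_mem {κ : Type*} [LinearOrder κ] (h : M ≅[L] N)
    {a : κ → M} {b : κ → N} {s : Set κ}
    (hs : ∀ i ∈ s, IsPartialElementary L (Sum.elim (fun j : Iio i => a j) fun _ : Unit => a i)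
      (Sum.elim (fun j : Iio i => b j) fun _ : Unit => b i)) :
    IsPartialElementary L (fun j : s => a j) (fun j : s => b j) := by
  intro n φ ι
  rcases isEmpty_or_nonempty (Fin n) with hn | hn
  · exact h.isPartialElementary_of_isEmpty (fun k => a (ι k)) (fun k => b (ι k)) φ id
  obtain ⟨k₀, hk₀⟩ := Finite.exists_max fun k => (ι k : κ)
  set i : κ := (ι k₀ : κ)
  let g (k : Fin n) : Iio i ⊕ Unit := if hk : (ι k : κ) < i then .inl ⟨ι k, hk⟩ else .inr ()
  have hι (k : Fin n) (hk : ¬(ι k : κ) < i) : (ι k : κ) = i := le_antisymm (hk₀ k) (not_lt.1 hk)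
  convert hs i (ι k₀).2 φ g using 2 <;> ext k <;> by_cases hk : (ι k : κ) < i <;> simp [g, hk, hι]

end PartialElementary

variable (L) in
def HasCountableForth (M N : Type w) [L.Structure M] [L.Structure N] : Prop :=
  ∀ ⦃γ : Type w⦄ [Countable γ] ⦃a : γ → M⦄ ⦃b : γ → N⦄, IsPartialElementary L a b →
    ∀ m : M, ∃ n : N,
      IsPartialElementary L (Sum.elim a fun _ : Unit => m) (Sum.elim b fun _ : Unit => n)

namespace Ultraproduct

variable {A : ℕ → Type w} [∀ i, L.Structure (A i)] [∀ i, Nonempty (A i)] {u : Ultrafilter ℕ}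

theorem exists_forall_realize (hu : (u : Filter ℕ) ≤ cofinite) {γ : Type*}
    (v : γ → (u : Filter ℕ).Product A) (φ : ℕ → L.Formula (γ ⊕ Unit))
    (h : ∀ n, ∃ x, ∀ k ≤ n, (φ k).Realize (Sum.elim v fun _ => x)) :
    ∃ x, ∀ k, (φ k).Realize (Sum.elim v fun _ => x) := by
  classical
  obtain ⟨V, rfl⟩ : ∃ V : γ → ∀ i, A i, (fun t => (V t : (u : Filter ℕ).Product A)) = v :=
    (Quotient.mk_surjective (s := (u : Filter ℕ).productSetoid A)).comp_left v
  let R (k i : ℕ) (y : A i) : Prop := (φ k).Realize (Sum.elim (fun t => V t i) fun _ => y)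
  have los (k : ℕ) (g : ∀ i, A i) :
      (φ k).Realize (Sum.elim (fun t => (V t : (u : Filter ℕ).Product A))
        fun _ => (g : (u : Filter ℕ).Product A)) ↔ ∀ᶠ i in (u : Filter ℕ), R k i (g i) := by
    convert realize_formula_cast (u := u) (φ k) (Sum.elim V fun _ => g) using 2 with i
    · ext (t | t) <;> rfl
    · congr! 2; ext (t | t) <;> rfl
  have hX (n : ℕ) : {i | ∃ y, ∀ k ≤ n, R k i y} ∈ (u : Filter ℕ) := by
    obtain ⟨x, hx⟩ := h n
    obtain ⟨g, rfl⟩ := Quotient.mk_surjective (s := (u : Filter ℕ).productSetoid A) x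
    have := (eventually_all_finite (finite_Iic n)).2 fun k hk => (los k g).1 (hx k hk)
    exact mem_of_superset this fun i hi => ⟨g i, hi⟩
  obtain ⟨d, hd⟩ := Filter.exists_forall_eventually_le_and_mem hu hX
  refine ⟨(fun i => Classical.epsilon fun y => ∀ k ≤ d i, R k i y : ∀ i, A i),
    fun k => (los k _).2 ?_⟩
  filter_upwards [hd k] with i ⟨hk, hi⟩
  exact Classical.epsilon_spec hi k hk

theorem hasCountableForth (hL : L.card ≤ ℵ₀) (hu : (u : Filter ℕ) ≤ cofinite) (S : Type w)
    [L.Structure S] : HasCountableForth L S ((u : Filter ℕ).Product A) := by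
  intro γ _ a b hab m
  classical
  have : Countable L.Symbols := mk_le_aleph0_iff.1 hL
  obtain ⟨e, he⟩ := exists_surjective_nat (L.Formula (γ ⊕ Unit))
  let am := Sum.elim a fun _ : Unit => m
  let tp (φ : L.Formula (γ ⊕ Unit)) : L.Formula (γ ⊕ Unit) := if φ.Realize am then φ else ∼φ
  have tp_realize (φ) : (tp φ).Realize am := by
    by_cases hφ : φ.Realize am <;> simp [tp, hφ]
  have finitely_satisfiable (n : ℕ) :
      ∃ x, ∀ k ≤ n, (tp (e k)).Realize (Sum.elim b fun _ => x) := by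
    let θ : L.Formula γ := Formula.iExs Unit (Formula.iInf fun k : Iic n => tp (e k))
    have hθ : θ.Realize a :=
      Formula.realize_iExs.2 ⟨fun _ => m, Formula.realize_iInf.2 fun k => tp_realize _⟩
    obtain ⟨x, hx⟩ := Formula.realize_iExs.1 ((hab.realize_formula θ).1 hθ)
    exact ⟨x (), fun k hk => Formula.realize_iInf.1 hx ⟨k, hk⟩⟩
  obtain ⟨x, hx⟩ := exists_forall_realize hu b (tp ∘ e) finitely_satisfiable
  have realize_iff (φ : L.Formula (γ ⊕ Unit)) :
      φ.Realize am ↔ φ.Realize (Sum.elim b fun _ => x) := by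
    obtain ⟨k, rfl⟩ := he φ
    by_cases hφ : (e k).Realize am <;> simpa [tp, hφ] using hx k
  exact ⟨x, fun n φ ι => by simpa only [Formula.realize_relabel] using realize_iff (φ.relabel ι)⟩

end Ultraproduct

variable {M N : Type w} [L.Structure M] [L.Structure N] [Nonempty M] [Nonempty N]

theorem nonempty_equiv_of_surjective_of_hasCountableForth {κ : Type w} [LinearOrder κ]
    [WellFoundedLT κ] (hκ : ∀ i : κ, Countable (Iio i)) {e : κ → M ⊕ N} (he : e.Surjective)
    (h : M ≅[L] N) (hMN : HasCountableForth L M N) (hNM : HasCountableForth L N M) :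
    Nonempty (M ≃[L] N) := by
  let Good (i : κ) (g : Iio i → M × N) (p : M × N) : Prop :=
    (e i = .inl p.1 ∨ e i = .inr p.2) ∧
      IsPartialElementary L (Sum.elim (fun j => (g j).1) fun _ : Unit => p.1)
        (Sum.elim (fun j => (g j).2) fun _ : Unit => p.2)
  obtain ⟨f, hf⟩ := WellFoundedLT.exists_recursive_choice Good
  have hgood (i : κ) : Good i (fun j => f j) (f i) := by
    induction i using WellFoundedLT.induction with | _ i ih
    have hprev : IsPartialElementary L (fun j : Iio i => (f j).1) (fun j : Iio i => (f j).2) :=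
      isPartialElementary_restrict_of_forall_mem h (a := fun i => (f i).1) (b := fun i => (f i).2)
        fun j hj => (ih j hj).2
    have : Countable (Iio i) := hκ i
    refine hf i ?_
    rcases hi : e i with m | n
    · obtain ⟨n, hn⟩ := hMN hprev m
      exact ⟨(m, n), .inl hi, hn⟩
    · obtain ⟨m, hm⟩ := hNM hprev.symm n
      exact ⟨(m, n), .inr hi, hm.symm⟩
  have hall : IsPartialElementary L (fun i => (f i).1) (fun i => (f i).2) :=
    (isPartialElementary_restrict_of_forall_mem h (a := fun i => (f i).1) (b := fun i => (f i).2)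
      (s := univ) fun i _ => (hgood i).2).comp fun i => ⟨i, mem_univ i⟩
  refine ⟨hall.equivOfSurjective (fun m => ?_) (fun n => ?_)⟩
  · obtain ⟨i, hi⟩ := he (.inl m)
    rcases (hgood i).1 with h' | h' <;> rw [hi] at h'
    · exact ⟨i, (Sum.inl_injective h').symm⟩
    · exact absurd h' Sum.inl_ne_inr
  · obtain ⟨i, hi⟩ := he (.inr n)
    rcases (hgood i).1 with h' | h' <;> rw [hi] at h'
    · exact absurd h' Sum.inr_ne_inl
    · exact ⟨i, (Sum.inr_injective h').symm⟩

theorem nonempty_equiv_of_mk_le_aleph_one (hM : #M ≤ ℵ₁) (hN : #N ≤ ℵ₁) (h : M ≅[L] N)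
    (hMN : HasCountableForth L M N) (hNM : HasCountableForth L N M) : Nonempty (M ≃[L] N) := by
  let κ := (ℵ₁ : Cardinal.{w}).ord.ToType
  have hκ (i : κ) : Countable (Iio i) := by
    rw [← mk_le_aleph0_iff, ← lt_aleph_one_iff]
    simpa [κ] using mk_Iio_lt i
  have hMN_le : #(M ⊕ N) ≤ #κ := by
    simpa [κ] using add_le_of_le (aleph0_le_aleph 1) hM hN
  obtain ⟨e, he⟩ : ∃ e : κ → M ⊕ N, e.Surjective :=
    Function.exists_surjective_iff.2 ⟨inferInstance, (le_def _ _).1 hMN_le⟩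
  exact nonempty_equiv_of_surjective_of_hasCountableForth hκ he h hMN hNM

end FirstOrder.Language

theorem ultraproducts_isomorphic_iff_elementarilyEquivalent_of_CH
    {L : FirstOrder.Language.{u, v}} (hL : L.card ≤ Cardinal.aleph0)
    (hCH : (2 : Cardinal.{w}) ^ Cardinal.aleph0 = Cardinal.aleph 1)
    (A B : ℕ → Type w) [∀ i, L.Structure (A i)] [∀ i, L.Structure (B i)]
    [∀ i, Nonempty (A i)] [∀ i, Nonempty (B i)]
    (hA : ∀ i, #(A i) ≤ 2 ^ Cardinal.aleph0) (hB : ∀ i, #(B i) ≤ 2 ^ Cardinal.aleph0)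
    (u₁ u₂ : Ultrafilter ℕ) (hu₁ : (u₁ : Filter ℕ) ≤ Filter.cofinite)
    (hu₂ : (u₂ : Filter ℕ) ≤ Filter.cofinite) :
    Nonempty ((u₁ : Filter ℕ).Product A ≃[L] (u₂ : Filter ℕ).Product B) ↔
      ((u₁ : Filter ℕ).Product A ≅[L] (u₂ : Filter ℕ).Product B) := by
  refine ⟨fun ⟨f⟩ => f.toElementaryEmbedding.elementarilyEquivalent, fun h => ?_⟩
  exact nonempty_equiv_of_mk_le_aleph_one
    (hCH ▸ Filter.mk_product_le_two_power_aleph0 _ hA)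
    (hCH ▸ Filter.mk_product_le_two_power_aleph0 _ hB) h
    (Ultraproduct.hasCountableForth hL hu₂ _) (Ultraproduct.hasCountableForth hL hu₁ _)
end

section
/- For a finite relational language there exist, for each m ∈ ℕ, only finitely many first-order formulas of quantifier rank at most m up to logical equivalence; consequently, for every σ-structure 𝔄 there is a single sentence χ of quantifier rank m such that for all σ-structures 𝔅, 𝔅 ⊨ χ if and only if 𝔄 ≡_m 𝔅. -/
open FirstOrder Language Structure Filter Set Cardinal

universe u v w x

namespace UP

variable {L : FirstOrder.Language.{u, v}}

/-- Quantifier rank of a bounded formula. -/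
def qr {L : FirstOrder.Language} {α : Type*} : ∀ {n : ℕ}, L.BoundedFormula α n → ℕ
  | _, .falsum => 0
  | _, .equal _ _ => 0
  | _, .rel _ _ => 0
  | _, .imp f g => max (qr f) (qr g)
  | _, .all f => qr f + 1

/-- `m`-equivalence: agreement on all sentences of quantifier rank at most `m`. -/
def MEquiv (L : FirstOrder.Language) (m : ℕ) (M : Type*) (N : Type*)
    [L.Structure M] [L.Structure N] : Prop :=
  ∀ φ : L.Sentence, qr φ ≤ m → (M ⊨ φ ↔ N ⊨ φ)

/-- The Gaifman graph of a structure. -/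
def gaifman (L : FirstOrder.Language) (M : Type*) [L.Structure M] : SimpleGraph M where
  Adj a b := a ≠ b ∧ ∃ (n : ℕ) (r : L.Relations n) (x : Fin n → M),
      RelMap r x ∧ a ∈ Set.range x ∧ b ∈ Set.range x
  symm := ⟨fun a b ⟨h, n, r, x, h1, h2, h3⟩ => ⟨h.symm, n, r, x, h1, h3, h2⟩⟩
  loopless := ⟨fun a ⟨h, _⟩ => h rfl⟩

/-- The `m`-ball around `a` with respect to Gaifman distance. -/
def ball (L : FirstOrder.Language) (M : Type*) [L.Structure M] (m : ℕ) (a : M) : Set M :=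
  {b | ∃ w : (gaifman L M).Walk a b, w.length ≤ m}

/-- The connected component of `a` in the Gaifman graph. -/
def component (L : FirstOrder.Language) (M : Type*) [L.Structure M] (a : M) : Set M :=
  {b | (gaifman L M).Reachable a b}

theorem self_mem_ball {L : FirstOrder.Language.{u, v}} {M : Type*} [L.Structure M] (m : ℕ) (a : M) : a ∈ ball L M m a :=
  ⟨SimpleGraph.Walk.nil, by simp⟩

theorem self_mem_component {M : Type*} [L.Structure M] (a : M) : a ∈ component L M a :=
  SimpleGraph.Reachable.refl a

/-- Induced structure on any subset (for relational languages). -/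
instance subStructure [L.IsRelational] {M : Type*} [L.Structure M] (s : Set M) :
    L.Structure s where
  funMap := fun f _ => isEmptyElim f
  RelMap := fun r x => RelMap r fun i => (x i : M)

/-- `a` has the `m`-ball type given by the pointed structure `(P, p)`. -/
def HasBallType (L : FirstOrder.Language.{u, v}) [L.IsRelational] {M : Type u}
    [L.Structure M] (m : ℕ) (a : M) (P : Type w) [L.Structure P] (p : P) : Prop :=
  ∃ g : ↥(ball L M m a) ≃[L] P, g ⟨a, self_mem_ball m a⟩ = p

/-- The number of elements of `M` of `m`-ball type `(P, p)`, as an extended natural number. -/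
noncomputable def ballTypeCount (L : FirstOrder.Language.{u, v}) [L.IsRelational]
    (M : Type u) [L.Structure M] (m : ℕ) (P : Type w) [L.Structure P] (p : P) : ℕ∞ :=
  {a : M | HasBallType L m a P p}.encard

/-- A Hanf sequence of `σ`-structures. -/
def IsHanfSequence (L : FirstOrder.Language.{u, v}) [L.IsRelational]
    (A : ℕ → Type u) [∀ i, L.Structure (A i)] : Prop :=
  (∀ i, #(A i) ≤ 2 ^ Cardinal.aleph0) ∧
  (∀ m : ℕ, ∃ e : ℕ, ∀ (i : ℕ) (a : A i), (ball L (A i) m a).encard ≤ e) ∧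
  (∀ (m : ℕ) (P : Type u) (_ : L.Structure P) (p : P),
     (∃ c : ℕ, ∀ᶠ i in Filter.atTop, ballTypeCount L (A i) m P p = c) ∨
     (∀ c : ℕ, ∀ᶠ i in Filter.atTop, (c : ℕ∞) < ballTypeCount L (A i) m P p))

/-- A back-and-forth system between `M` and `N`, as a set of pairs of finite tuples. -/
def IsBFSystem (L : FirstOrder.Language) (M : Type*) (N : Type*)
    [L.Structure M] [L.Structure N]
    (S : Set (Σ n : ℕ, (Fin n → M) × (Fin n → N))) : Prop :=
  (∀ q ∈ S, (∀ i j, q.2.1 i = q.2.1 j ↔ q.2.2 i = q.2.2 j) ∧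
    ∀ (k : ℕ) (r : L.Relations k) (f : Fin k → Fin q.1),
      (RelMap r (q.2.1 ∘ f) ↔ RelMap r (q.2.2 ∘ f))) ∧
  (∀ q ∈ S, ∀ a : M, ∃ b : N, (⟨q.1 + 1, Fin.snoc q.2.1 a, Fin.snoc q.2.2 b⟩ :
      Σ n : ℕ, (Fin n → M) × (Fin n → N)) ∈ S) ∧
  (∀ q ∈ S, ∀ b : N, ∃ a : M, (⟨q.1 + 1, Fin.snoc q.2.1 a, Fin.snoc q.2.2 b⟩ :
      Σ n : ℕ, (Fin n → M) × (Fin n → N)) ∈ S)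

/-- Two structures are partially isomorphic (back-and-forth equivalent). -/
def PartiallyIsomorphic (L : FirstOrder.Language) (M : Type*) (N : Type*)
    [L.Structure M] [L.Structure N] : Prop :=
  ∃ S, IsBFSystem L M N S ∧
    (⟨0, fun i => i.elim0, fun i => i.elim0⟩ : Σ n : ℕ, (Fin n → M) × (Fin n → N)) ∈ S

/-- Two pointed structures are partially isomorphic. -/
def PointedPartiallyIsomorphic (L : FirstOrder.Language) (M : Type*) (N : Type*)
    [L.Structure M] [L.Structure N] (a : M) (b : N) : Prop :=
  ∃ S, IsBFSystem L M N S ∧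
    (⟨1, fun _ => a, fun _ => b⟩ : Σ n : ℕ, (Fin n → M) × (Fin n → N)) ∈ S

/-- `κ`-saturation: every finitely realized type over fewer than `κ` parameters is realized. -/
def SaturatedAt (L : FirstOrder.Language) (κ : Cardinal.{0}) (M : Type*) [L.Structure M] : Prop :=
  ∀ (α : Type) (_ : #α < κ) (v : α → M) (Φ : Set (L.Formula (α ⊕ Unit))),
    (∀ F : Finset (L.Formula (α ⊕ Unit)), ↑F ⊆ Φ →
      ∃ x : M, ∀ φ ∈ F, φ.Realize (Sum.elim v fun _ => x)) →
    ∃ x : M, ∀ φ ∈ Φ, φ.Realize (Sum.elim v fun _ => x)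

end UP

open UP

/-!
A formula of quantifier rank at most `m` in `n` bound variables is a Boolean combination of
atomic formulas and of formulas `∀ x, ψ` with `ψ` of rank below `m` in `n + 1` variables. Over a
finite relational language there are finitely many atomic formulas, and by induction finitely many
`ψ` up to equivalence, so the truth value of the formula is a function of the truth values of a
finite set `T` of formulas. Such a formula is determined up to equivalence by the set of `T`-types
of the assignments satisfying it, and there are only finitely many sets of `T`-types.

The characteristic sentence of `M` is the conjunction of those representatives of rank at most `m`
that hold in `M` and of the negations of the others, padded to rank exactly `m` by a block of `m`
vacuous universal quantifiers.
-/

namespace UP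

variable {L : FirstOrder.Language.{u, v}} {α : Type*} {n m : ℕ}

@[simp] lemma qr_not (φ : L.BoundedFormula α n) : qr φ.not = qr φ := by
  simp [qr]

@[simp] lemma qr_top : qr (⊤ : L.BoundedFormula α n) = 0 := rfl

@[simp] lemma qr_inf (φ ψ : L.BoundedFormula α n) : qr (φ ⊓ ψ) = max (qr φ) (qr ψ) := by
  simp [Min.min, BoundedFormula.not, qr]

lemma qr_alls : ∀ {n : ℕ} (φ : L.BoundedFormula α n), qr φ.alls = qr φ + n
  | 0, _ => rfl
  | n + 1, φ => by simp [BoundedFormula.alls, qr_alls φ.all, qr]; omega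

lemma qr_foldr_inf_le (l : List (L.BoundedFormula α n)) (h : ∀ φ ∈ l, qr φ ≤ m) :
    qr (l.foldr (· ⊓ ·) ⊤) ≤ m := by
  induction l with
  | nil => simp
  | cons φ l ih => simp_all

lemma qr_iInf_le {β : Type*} [Finite β] (f : β → L.BoundedFormula α n) (h : ∀ b, qr (f b) ≤ m) :
    qr (BoundedFormula.iInf f) ≤ m :=
  qr_foldr_inf_le _ (by simpa using h)

lemma Term.exists_eq_var [L.IsRelational] {β : Type*} (t : L.Term β) : ∃ b, t = Term.var b := by
  cases t with
  | var b => exact ⟨b, rfl⟩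
  | func f _ => exact isEmptyElim f

lemma finite_setOf_isAtomic [L.IsRelational] [Finite (Σ k, L.Relations k)] [Finite α] :
    {φ : L.BoundedFormula α n | φ.IsAtomic}.Finite := by
  let atom : ((α ⊕ Fin n) × (α ⊕ Fin n)) ⊕ (Σ r : Σ k, L.Relations k, Fin r.1 → α ⊕ Fin n) →
      L.BoundedFormula α n :=
    Sum.elim (fun p => (Term.var p.1).bdEqual (Term.var p.2))
      (fun r => r.1.2.boundedFormula fun i => Term.var (r.2 i))
  refine (Set.finite_range atom).subset ?_
  rintro _ (⟨t₁, t₂⟩ | ⟨R, ts⟩)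
  · obtain ⟨b₁, rfl⟩ := Term.exists_eq_var t₁
    obtain ⟨b₂, rfl⟩ := Term.exists_eq_var t₂
    exact ⟨.inl (b₁, b₂), rfl⟩
  · choose b hb using fun i => Term.exists_eq_var (ts i)
    exact ⟨.inr ⟨⟨_, R⟩, b⟩, congrArg R.boundedFormula (funext fun i => (hb i).symm)⟩

/- The universe of the models is the first universe parameter of `SemEquiv`, `DeterminedBy` and
`realizedTypes`, so that statements can fix it as `SemEquiv.{w}`. -/
def SemEquiv.{w', u', v', x'} {L : FirstOrder.Language.{u', v'}} {α : Type x'} {n : ℕ}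
    (φ ψ : L.BoundedFormula α n) : Prop :=
  ∀ (M : Type w') [L.Structure M] (v : α → M) (xs : Fin n → M), φ.Realize v xs ↔ ψ.Realize v xs

def DeterminedBy.{w', u', v', x'} {L : FirstOrder.Language.{u', v'}} {α : Type x'} {n : ℕ}
    (T : Set (L.BoundedFormula α n)) (φ : L.BoundedFormula α n) : Prop :=
  ∀ (M N : Type w') [L.Structure M] [L.Structure N] (v : α → M) (xs : Fin n → M) (v' : α → N)
    (xs' : Fin n → N), (∀ t ∈ T, t.Realize v xs ↔ t.Realize v' xs') →
      (φ.Realize v xs ↔ φ.Realize v' xs')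

def realizedTypes.{w', u', v', x'} {L : FirstOrder.Language.{u', v'}} {α : Type x'} {n : ℕ}
    (T : Set (L.BoundedFormula α n)) (φ : L.BoundedFormula α n) : Set (T → Prop) :=
  {p | ∃ (M : Type w') (_ : L.Structure M) (v : α → M) (xs : Fin n → M),
    φ.Realize v xs ∧ p = fun t => t.1.Realize v xs}

lemma SemEquiv.all {φ ψ : L.BoundedFormula α (n + 1)} (h : SemEquiv.{w} φ ψ) :
    SemEquiv.{w} φ.all ψ.all := fun M _ v _ => forall_congr' fun _ => h M v _

lemma SemEquiv.realize_formula_iff {φ ψ : L.Formula α} (h : SemEquiv.{w} φ ψ) (M : Type w)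
    [L.Structure M] (v : α → M) : φ.Realize v ↔ ψ.Realize v :=
  h M v default

lemma SemEquiv.realize_sentence_iff {φ ψ : L.Sentence} (h : SemEquiv.{w} φ ψ) (M : Type w)
    [L.Structure M] : M ⊨ φ ↔ M ⊨ ψ :=
  h.realize_formula_iff M default

namespace DeterminedBy

variable {T : Set (L.BoundedFormula α n)} {φ ψ : L.BoundedFormula α n}

lemma of_mem (h : φ ∈ T) : DeterminedBy.{w} T φ :=
  fun _ _ _ _ _ _ _ _ hT => hT φ h

lemma of_semEquiv (h : SemEquiv.{w} φ ψ) (hψ : DeterminedBy.{w} T ψ) : DeterminedBy.{w} T φ :=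
  fun M N _ _ v xs v' xs' hT => by rw [h M v xs, h N v' xs']; exact hψ M N v xs v' xs' hT

lemma falsum : DeterminedBy.{w} T ⊥ :=
  fun _ _ _ _ _ _ _ _ _ => Iff.rfl

lemma imp (hφ : DeterminedBy.{w} T φ) (hψ : DeterminedBy.{w} T ψ) : DeterminedBy.{w} T (φ.imp ψ) :=
  fun M N _ _ v xs v' xs' hT => imp_congr (hφ M N v xs v' xs' hT) (hψ M N v xs v' xs' hT)

end DeterminedBy

lemma determinedBy_of_qr_le {T : Set (L.BoundedFormula α n)}
    (hatomic : ∀ φ : L.BoundedFormula α n, φ.IsAtomic → φ ∈ T)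
    (hall : ∀ φ : L.BoundedFormula α (n + 1), qr φ < m → ∃ ψ ∈ T, SemEquiv.{w} φ.all ψ)
    (φ : L.BoundedFormula α n) (hφ : qr φ ≤ m) : DeterminedBy.{w} T φ := by
  induction φ with
  | falsum => exact .falsum
  | equal t₁ t₂ => exact .of_mem (hatomic _ (.equal t₁ t₂))
  | rel R ts => exact .of_mem (hatomic _ (.rel R ts))
  | imp φ ψ ihφ ihψ =>
    rw [qr, max_le_iff] at hφ
    exact (ihφ hatomic hall hφ.1).imp (ihψ hatomic hall hφ.2)
  | all φ _ =>
    obtain ⟨ψ, hψT, hψ⟩ := hall φ hφ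
    exact .of_semEquiv hψ (.of_mem hψT)

lemma semEquiv_of_realizedTypes_eq {T : Set (L.BoundedFormula α n)} {φ ψ : L.BoundedFormula α n}
    (hφ : DeterminedBy.{w} T φ) (hψ : DeterminedBy.{w} T ψ)
    (h : realizedTypes.{w} T φ = realizedTypes.{w} T ψ) : SemEquiv.{w} φ ψ := by
  have key : ∀ {φ ψ : L.BoundedFormula α n}, DeterminedBy.{w} T ψ →
      realizedTypes.{w} T φ ⊆ realizedTypes.{w} T ψ →
      ∀ (M : Type w) [L.Structure M] (v : α → M) (xs : Fin n → M),
        φ.Realize v xs → ψ.Realize v xs := by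
    intro φ ψ hψ hsub M _ v xs hφ
    obtain ⟨N, _, v', xs', hψN, htype⟩ := hsub ⟨M, inferInstance, v, xs, hφ, rfl⟩
    exact (hψ M N v xs v' xs' fun t ht => (congrFun htype ⟨t, ht⟩).to_iff).2 hψN
  exact fun M _ v xs => ⟨key hψ h.subset M v xs, key hφ h.symm.subset M v xs⟩

lemma exists_finite_semEquiv_reps {T : Set (L.BoundedFormula α n)} (hT : T.Finite)
    {A : Set (L.BoundedFormula α n)} (hA : ∀ φ ∈ A, DeterminedBy.{w} T φ) :
    ∃ S ⊆ A, S.Finite ∧ ∀ φ ∈ A, ∃ ψ ∈ S, SemEquiv.{w} φ ψ := by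
  have := hT.to_subtype
  obtain ⟨S, hSA, hS⟩ := Set.exists_subset_bijOn A (realizedTypes.{w} T)
  refine ⟨S, hSA, .of_finite_image (hS.image_eq ▸ Set.toFinite _) hS.injOn, fun φ hφ => ?_⟩
  obtain ⟨ψ, hψS, hψφ⟩ := hS.surjOn (Set.mem_image_of_mem _ hφ)
  exact ⟨ψ, hψS, semEquiv_of_realizedTypes_eq (hA φ hφ) (hA ψ (hSA hψS)) hψφ.symm⟩

lemma exists_finite_reps_of_reps_below [L.IsRelational] [Finite (Σ k, L.Relations k)] [Finite α]
    {R : Set (L.BoundedFormula α (n + 1))} (hR : R.Finite)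
    (hall : ∀ φ : L.BoundedFormula α (n + 1), qr φ < m → ∃ ψ ∈ R, SemEquiv.{w} φ ψ) :
    ∃ S : Set (L.BoundedFormula α n), S.Finite ∧ (∀ ψ ∈ S, qr ψ ≤ m) ∧
      ∀ φ, qr φ ≤ m → ∃ ψ ∈ S, SemEquiv.{w} φ ψ := by
  have hdet : ∀ φ : L.BoundedFormula α n, qr φ ≤ m →
      DeterminedBy.{w} ({φ | φ.IsAtomic} ∪ BoundedFormula.all '' R) φ := by
    refine determinedBy_of_qr_le (fun φ hφ => .inl hφ) fun φ hφ => ?_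
    obtain ⟨ψ, hψR, hψ⟩ := hall φ hφ
    exact ⟨ψ.all, .inr (Set.mem_image_of_mem _ hψR), hψ.all⟩
  obtain ⟨S, hSqr, hSfin, hS⟩ :=
    exists_finite_semEquiv_reps (finite_setOf_isAtomic.union (hR.image _)) hdet
  exact ⟨S, hSfin, hSqr, hS⟩

lemma exists_finite_reps_of_qr_le [L.IsRelational] [Finite (Σ k, L.Relations k)] [Finite α]
    (m n : ℕ) : ∃ S : Set (L.BoundedFormula α n), S.Finite ∧ (∀ ψ ∈ S, qr ψ ≤ m) ∧
      ∀ φ, qr φ ≤ m → ∃ ψ ∈ S, SemEquiv.{w} φ ψ := by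
  induction m generalizing n with
  | zero => exact exists_finite_reps_of_reps_below Set.finite_empty fun _ h => absurd h (by omega)
  | succ m ih =>
    obtain ⟨R, hRfin, -, hR⟩ := ih (n + 1)
    exact exists_finite_reps_of_reps_below hRfin fun φ hφ => hR φ (by omega)

open Classical in
noncomputable def theoryConj (S : Finset L.Sentence) (M : Type*) [L.Structure M] : L.Sentence :=
  BoundedFormula.iInf fun ψ : S => if M ⊨ ψ.1 then ψ.1 else ψ.1.not

lemma qr_theoryConj_le {S : Finset L.Sentence} (hS : ∀ ψ ∈ S, qr ψ ≤ m) (M : Type*)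
    [L.Structure M] : qr (theoryConj S M) ≤ m :=
  qr_iInf_le _ fun ψ => by split_ifs <;> simp [hS ψ.1 ψ.2]

lemma realize_theoryConj {S : Finset L.Sentence} {M N : Type*} [L.Structure M] [L.Structure N] :
    N ⊨ theoryConj S M ↔ ∀ ψ ∈ S, (N ⊨ ψ ↔ M ⊨ ψ) := by
  refine BoundedFormula.realize_iInf.trans <| Subtype.forall.trans <| forall₂_congr fun ψ _ => ?_
  split_ifs with hM
  · exact (iff_true_right hM).symm
  · exact BoundedFormula.realize_not.trans (iff_false_right hM).symm

def rankPad (L : FirstOrder.Language) (m : ℕ) : L.Sentence :=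
  (⊤ : L.BoundedFormula Empty m).alls

@[simp] lemma qr_rankPad : qr (rankPad L m) = m := by
  simp [rankPad, qr_alls]

lemma realize_rankPad (M : Type*) [L.Structure M] : M ⊨ rankPad L m :=
  BoundedFormula.realize_alls.2 fun _ => BoundedFormula.realize_top.2 trivial

lemma exists_characteristic_sentence {S : Finset L.Sentence} (hSqr : ∀ ψ ∈ S, qr ψ ≤ m)
    (hS : ∀ φ : L.Sentence, qr φ ≤ m → ∃ ψ ∈ S, SemEquiv.{w} φ ψ) (M : Type w) [L.Structure M] :
    ∃ χ : L.Sentence, qr χ = m ∧ ∀ (N : Type w) [L.Structure N], N ⊨ χ ↔ MEquiv L m M N := by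
  refine ⟨rankPad L m ⊓ theoryConj S M, by simp [qr_theoryConj_le hSqr], fun N _ => ?_⟩
  rw [Sentence.realize_inf, realize_theoryConj, and_iff_right (realize_rankPad N)]
  refine ⟨fun h φ hφ => ?_, fun h ψ hψ => (h ψ (hSqr ψ hψ)).symm⟩
  obtain ⟨ψ, hψS, hψ⟩ := hS φ hφ
  rw [hψ.realize_sentence_iff, hψ.realize_sentence_iff, h ψ hψS]

end UP

theorem finitely_many_formulas_and_characteristic_sentence
    {L : FirstOrder.Language.{u, v}} [L.IsRelational] [Finite (Σ n, L.Relations n)]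
    (m : ℕ) :
    (∀ (α : Type) [Finite α], ∃ S : Set (L.Formula α), S.Finite ∧
      ∀ φ : L.Formula α, qr φ ≤ m → ∃ ψ ∈ S,
        ∀ (M : Type u) [L.Structure M] (v : α → M), φ.Realize v ↔ ψ.Realize v) ∧
    (∀ (M : Type u) [L.Structure M], ∃ χ : L.Sentence, qr χ = m ∧
      ∀ (N : Type u) [L.Structure N], N ⊨ χ ↔ MEquiv L m M N) := by
  refine ⟨fun α _ => ?_, fun M _ => ?_⟩
  · obtain ⟨S, hSfin, -, hS⟩ := exists_finite_reps_of_qr_le (L := L) (α := α) m 0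
    exact ⟨S, hSfin, fun φ hφ =>
      (hS φ hφ).imp fun ψ ⟨hψS, hψ⟩ => ⟨hψS, hψ.realize_formula_iff⟩⟩
  · obtain ⟨S, hSfin, hSqr, hS⟩ := exists_finite_reps_of_qr_le (L := L) (α := Empty) m 0
    exact exists_characteristic_sentence (S := hSfin.toFinset) (by simpa using hSqr)
      (by simpa using hS) M
end

section
/- There is a consistent extension of ZFC in which there exist two ultraproducts over ℕ (with respect to non-principal ultrafilters), both of cardinality 2^ω, that are elementarily equivalent but not isomorphic. Concretely: if 2^{ω₂} = 2^ω, then for the two-sorted structure 𝔄 given by ω₁ together with its finite subsets and the membership relation E, and any ω₂-saturated elementary extension 𝔅 of 𝔄 of cardinality at most 2^ω, the ultrapowers 𝔄^ℕ/𝒰₁ and 𝔅^ℕ/𝒰₂ (for any non-principal ultrafilters 𝒰₁, 𝒰₂ on ℕ) are elementarily equivalent but not isomorphic. -/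
open FirstOrder Language Structure Filter Set Cardinal

universe u v w x

open UP

/-- The two-sorted structure of `ω₁` together with its finite subsets, with the
membership relation interpreted by the single binary relation symbol. -/
instance memStructure (X : Type) : Language.graph.Structure (X ⊕ Finset X) where
  RelMap | .adj => fun x =>
    match x 0, x 1 with
    | Sum.inl a, Sum.inr s => a ∈ s
    | _, _ => False


/-!
An ultrapower over a non-principal ultrafilter on `ℕ` of an infinite structure of size at most
`𝔠` has size exactly `𝔠`, and Łoś's theorem makes the two ultrapowers elementarily equivalent.

To separate them, call an element an atom if it is `E`-below something. In `𝔅`, the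
first-order fact that any two elements have an `E`-union (true in `𝔄`) together with
`ω₂`-saturation puts any `ω₁` atoms `E`-below a single element, and this passes to `𝔅^ℕ/𝒰₂`
coordinatewise. In `𝔄^ℕ/𝒰₁` it fails for the `ω₁` constant atoms: the coordinates of a
sequence in `𝔄^ℕ` are finite sets, so only countably many points lie in any of them.
-/

local notation:50 a:51 " ∈ᴱ " b:51 => RelMap Language.adj ![a, b]

theorem mk_product_le_power {ι M : Type u} (l : Filter ι) :
    #(l.Product fun _ : ι => M) ≤ #M ^ #ι :=
  (power_def M ι).symm ▸ mk_quotient_le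

theorem continuum_le_mk_product {M : Type} [Infinite M] (l : Filter ℕ) [l.NeBot]
    (hl : l ≤ cofinite) : 𝔠 ≤ #(l.Product fun _ : ℕ => M) := by
  let e : List Bool ↪ M := (Encodable.encode' _).trans (Infinite.natEmbedding M)
  -- Two distinct sequences have distinct prefixes from some length on.
  let code : (ℕ → Bool) → l.Product fun _ : ℕ => M :=
    fun g => ((fun n => e (List.ofFn fun i : Fin n => g i)) : ℕ → M)
  have hcode : Function.Injective code := by
    intro g h hgh
    by_contra hne
    obtain ⟨i, hi⟩ := Function.ne_iff.1 hne
    have hdiff : ∀ᶠ n in l, List.ofFn (fun k : Fin n => g k) ≠ List.ofFn fun k : Fin n => h k :=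
      hl <| (Nat.cofinite_eq_atTop ▸ eventually_gt_atTop i).mono fun n hn heq =>
        hi (congrFun (List.ofFn_inj.1 heq) ⟨i, hn⟩)
    obtain ⟨n, hn, heq⟩ := (hdiff.and (Quotient.eq''.1 hgh)).exists
    exact hn (e.injective heq)
  calc 𝔠 = #(ℕ → Bool) := by simp
    _ ≤ _ := mk_le_of_injective hcode

theorem mk_product_eq_continuum {M : Type} [Infinite M] (hM : #M ≤ 𝔠) (l : Filter ℕ) [l.NeBot]
    (hl : l ≤ cofinite) : #(l.Product fun _ : ℕ => M) = 𝔠 := by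
  refine le_antisymm ?_ (continuum_le_mk_product l hl)
  calc #(l.Product fun _ : ℕ => M) ≤ #M ^ ℵ₀ := mk_nat ▸ mk_product_le_power l
    _ ≤ 𝔠 ^ ℵ₀ := power_le_power_right hM
    _ = 𝔠 := continuum_power_aleph0

theorem FirstOrder.Language.ElementarilyEquivalent.ultrapower {L : Language} {ι κ M N : Type*}
    [L.Structure M] [L.Structure N] [Nonempty M] [Nonempty N] (h : M ≅[L] N)
    (u : Ultrafilter ι) (v : Ultrafilter κ) :
    (u : Filter ι).Product (fun _ => M) ≅[L] (v : Filter κ).Product (fun _ => N) :=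
  elementarilyEquivalent_iff.2 fun φ => by
    rw [Ultraproduct.sentence_realize, Ultraproduct.sentence_realize, eventually_const,
      eventually_const]
    exact h.realize_sentence φ

theorem relMap_adj_coe {ι M : Type*} [Language.graph.Structure M] (u : Ultrafilter ι)
    (f g : ι → M) :
    RelMap (M := (u : Filter ι).Product fun _ => M) Language.adj
      ![(f : (u : Filter ι).Product fun _ => M), g] ↔
      ∀ᶠ n in (u : Filter ι), f n ∈ᴱ g n := by
  have h := relMap_quotient_mk' (s := (u : Filter ι).productSetoid fun _ => M)
    Language.adj ![f, g]
  have hcoe : (fun i => (⟦(![f, g] : Fin 2 → ι → M) i⟧ :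
      Quotient ((u : Filter ι).productSetoid fun _ => M))) =
      ![(f : (u : Filter ι).Product fun _ => M), (g : (u : Filter ι).Product fun _ => M)] := by
    funext i; fin_cases i <;> rfl
  rw [hcoe] at h
  refine h.trans (eventually_congr (Eventually.of_forall fun n => ?_))
  have hvec : (fun i => (![f, g] : Fin 2 → ι → M) i n) = ![f n, g n] := by
    funext i; fin_cases i <;> rfl
  rw [hvec]

theorem FirstOrder.Language.Equiv.adj_iff {M N : Type*} [Language.graph.Structure M]
    [Language.graph.Structure N] (g : M ≃[Language.graph] N) (a b : M) :
    (g a ∈ᴱ g b) ↔ (a ∈ᴱ b) := by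
  have hvec : g ∘ ![a, b] = ![g a, g b] := by
    funext i; fin_cases i <;> rfl
  rw [← hvec]
  exact g.map_rel _ _

section Unions

variable {M : Type*} [Language.graph.Structure M]

def HasUnions (M : Type*) [Language.graph.Structure M] : Prop :=
  ∀ s t : M, ∃ w, ∀ x, (x ∈ᴱ s) ∨ (x ∈ᴱ t) → x ∈ᴱ w

def unionSentence : Language.graph.Sentence :=
  ∀' ∀' ∃' ∀' ((Language.adj.boundedFormula₂ &3 &0 ⊔ Language.adj.boundedFormula₂ &3 &1) ⟹
    Language.adj.boundedFormula₂ &3 &2)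

theorem realize_unionSentence : M ⊨ unionSentence ↔ HasUnions M := by
  simp [unionSentence, HasUnions, Sentence.Realize, Formula.Realize, Fin.snoc]

theorem HasUnions.of_elementarilyEquivalent {N : Type*} [Language.graph.Structure N]
    (h : M ≅[Language.graph] N) (hM : HasUnions M) : HasUnions N :=
  realize_unionSentence.1 ((h.realize_sentence _).1 (realize_unionSentence.2 hM))

theorem HasUnions.exists_forall_mem_finset_adj [Nonempty M] (hM : HasUnions M) {α : Type*}
    (v : α → M) (hv : ∀ i, ∃ y, v i ∈ᴱ y) (s : Finset α) : ∃ y, ∀ i ∈ s, v i ∈ᴱ y := by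
  classical
  induction s using Finset.induction_on with
  | empty => exact ⟨Classical.arbitrary M, by simp⟩
  | insert i s _ ih =>
    obtain ⟨y, hy⟩ := ih
    obtain ⟨z, hz⟩ := hv i
    obtain ⟨w, hw⟩ := hM y z
    exact ⟨w, Finset.forall_mem_insert _ _ _ |>.2
      ⟨hw _ (Or.inr hz), fun j hj => hw _ (Or.inl (hy j hj))⟩⟩

end Unions

def setPart {X : Type} : X ⊕ Finset X → Finset X :=
  Sum.elim (fun _ => ∅) id

theorem inl_adj_iff {X : Type} (x : X) (b : X ⊕ Finset X) : (Sum.inl x ∈ᴱ b) ↔ x ∈ setPart b := by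
  cases b with
  | inl y => exact iff_of_false id (Finset.notMem_empty x)
  | inr s => exact Iff.rfl

theorem not_inr_adj {X : Type} (s : Finset X) (b : X ⊕ Finset X) : ¬ (Sum.inr s ∈ᴱ b) := by
  cases b <;> exact id

theorem hasUnions_sum_finset (X : Type) : HasUnions (X ⊕ Finset X) := by
  classical
  refine fun s t => ⟨Sum.inr (setPart s ∪ setPart t), ?_⟩
  rintro (x | r) hx
  · simp only [inl_adj_iff] at hx ⊢
    exact Finset.mem_union.2 hx
  · exact hx.elim (not_inr_adj r s) (not_inr_adj r t)

section Covering

def CoversFewerThan (κ : Cardinal.{0}) (M : Type*) [Language.graph.Structure M] : Prop :=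
  ∀ (α : Type) (_ : #α < κ) (v : α → M), (∀ i, ∃ y, v i ∈ᴱ y) → ∃ y, ∀ i, v i ∈ᴱ y

variable {κ : Cardinal.{0}} {M : Type*} [Language.graph.Structure M]

theorem UP.SaturatedAt.coversFewerThan [Nonempty M] (hsat : SaturatedAt Language.graph κ M)
    (hM : HasUnions M) : CoversFewerThan κ M := by
  classical
  intro α hα v hv
  let φ : α → Language.graph.Formula (α ⊕ Unit) := fun i =>
    Language.adj.formula₂ (Term.var (Sum.inl i)) (Term.var (Sum.inr ()))
  have hφ : ∀ i y, (φ i).Realize (Sum.elim v fun _ => y) ↔ (v i ∈ᴱ y) := fun i y => by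
    simp [φ]
  obtain ⟨y, hy⟩ := hsat α hα v (range φ) fun F hF => by
    obtain ⟨s, -, rfl⟩ := Finset.subset_set_image_iff.1 (by rwa [Set.image_univ])
    obtain ⟨y, hy⟩ := hM.exists_forall_mem_finset_adj v hv s
    exact ⟨y, by simpa [hφ] using hy⟩
  exact ⟨y, fun i => (hφ i y).1 (hy _ (mem_range_self i))⟩

theorem CoversFewerThan.ultraproduct {ι : Type*} (hM : CoversFewerThan κ M) (u : Ultrafilter ι) :
    CoversFewerThan κ ((u : Filter ι).Product fun _ => M) := by
  intro α hα v hv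
  obtain ⟨f, rfl⟩ : ∃ f : α → ι → M, (fun i => (f i : (u : Filter ι).Product fun _ => M)) = v :=
    ⟨fun i => (v i).out, funext fun i => Quotient.out_eq' (v i)⟩
  -- Each `f i` is an atom in almost every coordinate, so it suffices to bound, coordinatewise,
  -- those `f i n` that are atoms there.
  have hfactor : ∀ n, ∃ y, ∀ i : {i // ∃ y, f i n ∈ᴱ y}, f i n ∈ᴱ y := fun n =>
    hM _ ((mk_subtype_le _).trans_lt hα) (fun i => f i.1 n) fun i => i.2
  choose s hs using hfactor
  refine ⟨(s : (u : Filter ι).Product fun _ => M), fun i => ?_⟩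
  obtain ⟨y, hy⟩ := hv i
  obtain ⟨g, rfl⟩ : ∃ g : ι → M, (g : (u : Filter ι).Product fun _ => M) = y :=
    ⟨y.out, Quotient.out_eq' y⟩
  rw [relMap_adj_coe] at hy ⊢
  exact hy.mono fun n hn => hs n ⟨i, _, hn⟩

theorem CoversFewerThan.of_equiv {N : Type*} [Language.graph.Structure N]
    (g : M ≃[Language.graph] N) (hN : CoversFewerThan κ N) : CoversFewerThan κ M := by
  intro α hα v hv
  obtain ⟨y, hy⟩ := hN α hα (g ∘ v) fun i =>
    (hv i).elim fun y hy => ⟨g y, (g.adj_iff _ _).2 hy⟩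
  exact ⟨g.symm y, fun i => (g.adj_iff _ _).1 (by simpa using hy i)⟩

theorem not_coversFewerThan_ultrapower_sum_finset {ι X : Type} [Countable ι] (u : Ultrafilter ι)
    (hX : ℵ₀ < #X) (hκ : #X < κ) :
    ¬ CoversFewerThan κ ((u : Filter ι).Product fun _ => X ⊕ Finset X) := by
  intro hcov
  obtain ⟨T, hT⟩ := hcov X hκ
    (fun x => ((fun _ => Sum.inl x : ι → X ⊕ Finset X) : (u : Filter ι).Product _)) fun x =>
      ⟨((fun _ => Sum.inr {x} : ι → X ⊕ Finset X) : (u : Filter ι).Product _),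
        (relMap_adj_coe u _ _).2 (Eventually.of_forall fun _ => Finset.mem_singleton_self x)⟩
  obtain ⟨t, rfl⟩ : ∃ t : ι → X ⊕ Finset X, (t : (u : Filter ι).Product _) = T :=
    ⟨T.out, Quotient.out_eq' T⟩
  have hcover : (univ : Set X) ⊆ ⋃ n, ↑(setPart (t n)) := fun x _ =>
    mem_iUnion.2 (((relMap_adj_coe u _ _).1 (hT x)).exists.imp fun n => (inl_adj_iff x _).1)
  have : Countable X := countable_univ_iff.1
    ((countable_iUnion fun n => (setPart (t n)).countable_toSet).mono hcover)
  exact hX.not_ge mk_le_aleph0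

end Covering

theorem mk_sum_finset (X : Type) [Infinite X] : #(X ⊕ Finset X) = #X := by
  simp only [mk_sum, mk_finset_of_infinite, lift_id]
  exact add_eq_self (aleph0_le_mk X)

theorem elementarilyEquivalent_not_isomorphic_ultrapowers_general
    (X : Type) (hX : #X = Cardinal.aleph 1)
    (B : Type) [Language.graph.Structure B]
    (emb : (X ⊕ Finset X) ↪ₑ[Language.graph] B)
    (hBcard : #B ≤ 2 ^ Cardinal.aleph0)
    (hBsat : SaturatedAt Language.graph (Cardinal.aleph 2) B)
    (u₁ u₂ : Ultrafilter ℕ) (hu₁ : (u₁ : Filter ℕ) ≤ Filter.cofinite)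
    (hu₂ : (u₂ : Filter ℕ) ≤ Filter.cofinite) :
    #((u₁ : Filter ℕ).Product (fun _ : ℕ => X ⊕ Finset X)) = 2 ^ Cardinal.aleph0 ∧
    #((u₂ : Filter ℕ).Product (fun _ : ℕ => B)) = 2 ^ Cardinal.aleph0 ∧
    ((u₁ : Filter ℕ).Product (fun _ : ℕ => X ⊕ Finset X) ≅[Language.graph]
      (u₂ : Filter ℕ).Product (fun _ : ℕ => B)) ∧
    ¬ Nonempty ((u₁ : Filter ℕ).Product (fun _ : ℕ => X ⊕ Finset X) ≃[Language.graph]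
      (u₂ : Filter ℕ).Product (fun _ : ℕ => B)) := by
  have : Infinite X := infinite_iff.2 (hX ▸ aleph0_le_aleph 1)
  have : Infinite B := .of_injective emb emb.injective
  have hAB : (X ⊕ Finset X) ≅[Language.graph] B := emb.elementarilyEquivalent
  refine ⟨mk_product_eq_continuum ((mk_sum_finset X).trans hX ▸ aleph_one_le_continuum) _ hu₁,
    mk_product_eq_continuum hBcard _ hu₂, hAB.ultrapower u₁ u₂, ?_⟩
  rintro ⟨g⟩
  have hB : CoversFewerThan (ℵ_ 2) B :=
    hBsat.coversFewerThan ((hasUnions_sum_finset X).of_elementarilyEquivalent hAB)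
  exact not_coversFewerThan_ultrapower_sum_finset u₁ (hX ▸ aleph0_lt_aleph_one)
    (hX ▸ aleph_lt_aleph.2 one_lt_two) ((hB.ultraproduct u₂).of_equiv g)

theorem elementarilyEquivalent_not_isomorphic_ultrapowers
    (hEaston : (2 : Cardinal.{0}) ^ (Cardinal.aleph 2) = 2 ^ Cardinal.aleph0)
    (X : Type) (hX : #X = Cardinal.aleph 1)
    (B : Type) [Language.graph.Structure B]
    (emb : (X ⊕ Finset X) ↪ₑ[Language.graph] B)
    (hBcard : #B ≤ 2 ^ Cardinal.aleph0)
    (hBsat : SaturatedAt Language.graph (Cardinal.aleph 2) B)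
    (u₁ u₂ : Ultrafilter ℕ) (hu₁ : (u₁ : Filter ℕ) ≤ Filter.cofinite)
    (hu₂ : (u₂ : Filter ℕ) ≤ Filter.cofinite) :
    #((u₁ : Filter ℕ).Product (fun _ : ℕ => X ⊕ Finset X)) = 2 ^ Cardinal.aleph0 ∧
    #((u₂ : Filter ℕ).Product (fun _ : ℕ => B)) = 2 ^ Cardinal.aleph0 ∧
    ((u₁ : Filter ℕ).Product (fun _ : ℕ => X ⊕ Finset X) ≅[Language.graph]
      (u₂ : Filter ℕ).Product (fun _ : ℕ => B)) ∧
    ¬ Nonempty ((u₁ : Filter ℕ).Product (fun _ : ℕ => X ⊕ Finset X) ≃[Language.graph]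
      (u₂ : Filter ℕ).Product (fun _ : ℕ => B)) :=
  elementarilyEquivalent_not_isomorphic_ultrapowers_general X hX B emb hBcard hBsat u₁ u₂ hu₁ hu₂
end
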